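/- Let V(x) = x⁴/4 − κx²/2, ν = e^{-V}dx/Z, J u = −V'u + u', and suppose ‖Ju‖_{L²(ν)} ≤ c‖u‖_{H¹(ν)} for all u ∈ H¹(ν), where ‖u‖²_{H¹(ν)} = ∫(u')²dν + (∫u dν)² and C_P is a Poincaré constant. Then for all u ∈ H¹(ν), ‖e^{-V/2}u‖_∞ ≤ √(Z(c+1))·max(1, C_P)^{1/4}·‖u‖_{H¹(ν)}. -/

import Mathlib

/-!
With `ρ = e^{-V}` and `g = ρu²`, one has `g' = ρu(Ju + u')` with `Ju = -V'u + u'`. Both `g` and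
`g'` are integrable, so `g` vanishes at `-∞` and `g(x) ≤ ∫|g'| = Z ∫|u||Ju + u'| dν`, which
Cauchy–Schwarz bounds by `Z‖u‖(‖Ju‖ + ‖u'‖)`. The hypothesis on `J` and the Poincaré inequality
`‖u‖² ≤ max(1, C_P)‖u‖²_{H¹}` turn this into `Z(c + 1) max(1, C_P)^{1/2} ‖u‖²_{H¹}`.

For the hypothesis on `J` to say anything, `V'u` must lie in `L²(ν)`. This follows by integrating
`(V'u²ρ)'` over `[-R, R]`: the boundary terms have a sign because `V'` has the sign of `x` for
large `|x|`, and `V'' ≤ V'²/2 + C` lets `-V'²u²ρ` absorb the rest up to `∫(|C|u² + 4u'²)ρ`.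
-/

open MeasureTheory Real

/-- Membership in the weighted Sobolev space `H¹(ν)`. -/
def H1mem (ν : Measure ℝ) (u : ℝ → ℝ) : Prop :=
  Differentiable ℝ u ∧ MemLp u 2 ν ∧ MemLp (deriv u) 2 ν

open Filter Set Topology

lemma continuous_of_forall_hasDerivAt {f f' : ℝ → ℝ} (h : ∀ x, HasDerivAt f (f' x) x) :
    Continuous f :=
  continuous_iff_continuousAt.2 fun x => (h x).continuousAt

noncomputable def gibbsMeasure (V : ℝ → ℝ) (Z : ℝ) : Measure ℝ :=
  volume.withDensity fun x => ENNReal.ofReal (exp (-V x) / Z)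

section GibbsMeasure

variable {V : ℝ → ℝ} {Z : ℝ}

lemma integrable_gibbsMeasure_iff (hV : Measurable V) (hZ : 0 < Z) {f : ℝ → ℝ} :
    Integrable f (gibbsMeasure V Z) ↔ Integrable fun x => exp (-V x) * f x := by
  rw [gibbsMeasure, integrable_withDensity_iff (by fun_prop)
    (ae_of_all _ fun _ => ENNReal.ofReal_lt_top),
    ← integrable_const_mul_iff (isUnit_iff_ne_zero.2 hZ.ne')]
  refine integrable_congr (ae_of_all _ fun x => ?_)
  simp only [ENNReal.toReal_ofReal (div_nonneg (exp_pos (-V x)).le hZ.le)]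
  field_simp

lemma integral_gibbsMeasure (hV : Measurable V) (hZ : 0 < Z) (f : ℝ → ℝ) :
    ∫ x, exp (-V x) * f x = Z * ∫ x, f x ∂gibbsMeasure V Z := by
  rw [gibbsMeasure, integral_withDensity_eq_integral_toReal_smul (by fun_prop)
    (ae_of_all _ fun _ => ENNReal.ofReal_lt_top), ← integral_const_mul]
  refine integral_congr_ae (ae_of_all _ fun x => ?_)
  simp only [ENNReal.toReal_ofReal (div_nonneg (exp_pos (-V x)).le hZ.le), smul_eq_mul]
  field_simp

lemma memLp_two_gibbsMeasure_iff (hV : Measurable V) (hZ : 0 < Z) {f : ℝ → ℝ}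
    (hf : Measurable f) :
    MemLp f 2 (gibbsMeasure V Z) ↔ Integrable fun x => exp (-V x) * f x ^ 2 := by
  rw [memLp_two_iff_integrable_sq hf.aestronglyMeasurable, integrable_gibbsMeasure_iff hV hZ]

end GibbsMeasure

lemma le_integral_abs_of_hasDerivAt {g g' : ℝ → ℝ} (hg : ∀ x, HasDerivAt g (g' x) x)
    (hg_int : Integrable g) (hg'_int : Integrable g') (x : ℝ) :
    g x ≤ ∫ y, |g' y| := by
  have hlim : Tendsto g atBot (𝓝 0) := tendsto_zero_of_hasDerivAt_of_integrableOn_Iic (a := x)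
    (fun y _ => hg y) hg'_int.integrableOn hg_int.integrableOn
  have hftc := integral_Iic_of_hasDerivAt_of_tendsto' (a := x) (fun y _ => hg y)
    hg'_int.integrableOn hlim
  calc g x = ∫ y in Iic x, g' y := by rw [hftc, sub_zero]
    _ ≤ ∫ y in Iic x, |g' y| :=
      integral_mono hg'_int.integrableOn hg'_int.abs.integrableOn fun y => le_abs_self _
    _ ≤ ∫ y, |g' y| := setIntegral_le_integral hg'_int.abs (ae_of_all _ fun y => abs_nonneg _)

lemma integral_abs_mul_le_sqrt_mul_sqrt {α : Type*} [MeasurableSpace α] {μ : Measure α}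
    {f g : α → ℝ} (hf : MemLp f 2 μ) (hg : MemLp g 2 μ) :
    ∫ x, |f x| * |g x| ∂μ ≤ √(∫ x, f x ^ 2 ∂μ) * √(∫ x, g x ^ 2 ∂μ) := by
  have h := integral_mul_norm_le_Lp_mul_Lq Real.HolderConjugate.two_two
    (by simpa using hf) (by simpa using hg)
  simpa only [norm_eq_abs, rpow_two, sq_abs, sqrt_eq_rpow] using h

lemma sqrt_le_sqrt_max_one_mul_sqrt {a m d C : ℝ} (hd : 0 ≤ d) (h : a - m ^ 2 ≤ C * d) :
    √a ≤ √(max 1 C) * √(d + m ^ 2) := by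
  rw [← sqrt_mul (zero_le_one.trans (le_max_left 1 C))]
  refine sqrt_le_sqrt ?_
  nlinarith [mul_le_mul_of_nonneg_right (le_max_right 1 C) hd,
    mul_le_mul_of_nonneg_right (le_max_left 1 C) (sq_nonneg m)]

section Confining

variable {V V' V'' u : ℝ → ℝ} {C : ℝ}

lemma integral_exp_neg_mul_sq_le_of_confining (hV : ∀ x, HasDerivAt V (V' x) x)
    (hV' : ∀ x, HasDerivAt V' (V'' x) x) (hC : ∀ x, V'' x ≤ V' x ^ 2 / 2 + C)
    (hu : Differentiable ℝ u) (hu_int : Integrable fun x => exp (-V x) * u x ^ 2)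
    (hu'_int : Integrable fun x => exp (-V x) * deriv u x ^ 2) {R : ℝ} (hR : 0 ≤ R)
    (hR_top : 0 ≤ V' R) (hR_bot : V' (-R) ≤ 0) :
    ∫ x in -R..R, exp (-V x) * (V' x * u x) ^ 2 ≤
      4 * ∫ x, exp (-V x) * (|C| * u x ^ 2 + 4 * deriv u x ^ 2) := by
  set F := fun x => 4 * (V' x * u x ^ 2 * exp (-V x))
  set M := fun x => exp (-V x) * (|C| * u x ^ 2 + 4 * deriv u x ^ 2)
  set W := fun x => exp (-V x) * (V' x * u x) ^ 2
  have hF : ∀ x, HasDerivAt F (4 * ((V'' x * u x ^ 2 + 2 * V' x * u x * deriv u x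
      - V' x ^ 2 * u x ^ 2) * exp (-V x))) x := fun x =>
    ((((hV' x).mul ((hu x).hasDerivAt.pow 2)).mul (hV x).neg.exp).const_mul 4).congr_deriv
      (by simp only [Pi.pow_apply, Pi.mul_apply, Pi.neg_apply]; ring)
  -- `V'' ≤ V'²/2 + |C|` and `8V'uu' ≤ V'²u² + 16u'²`
  have hFW : ∀ x, 4 * ((V'' x * u x ^ 2 + 2 * V' x * u x * deriv u x
      - V' x ^ 2 * u x ^ 2) * exp (-V x)) ≤ 4 * M x - W x := fun x => by
    have hV'' : V'' x * u x ^ 2 ≤ (V' x ^ 2 / 2 + |C|) * u x ^ 2 :=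
      mul_le_mul_of_nonneg_right ((hC x).trans (by linarith [le_abs_self C])) (sq_nonneg _)
    have hcross := sq_nonneg (V' x * u x - 4 * deriv u x)
    have := exp_pos (-V x)
    simp only [M, W]
    nlinarith
  have hW : Continuous W := by
    have := continuous_of_forall_hasDerivAt hV
    have := continuous_of_forall_hasDerivAt hV'
    have := hu.continuous
    simp only [W]
    fun_prop
  have hM : Integrable M := (hu_int.const_mul |C|).add (hu'_int.const_mul 4) |>.congr
    (ae_of_all _ fun x => by simp only [M, Pi.add_apply]; ring)
  have hftc := intervalIntegral.sub_le_integral_of_hasDeriv_right_of_le (neg_le_self hR)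
    (φ := fun x => 4 * M x - W x)
    (fun x _ => (hF x).continuousAt.continuousWithinAt) (fun x _ => (hF x).hasDerivWithinAt)
    ((hM.const_mul 4).integrableOn.sub hW.integrableOn_Icc) (fun x _ => hFW x)
  rw [intervalIntegral.integral_sub (hM.const_mul 4).intervalIntegrable
    (hW.intervalIntegrable _ _), intervalIntegral.integral_const_mul] at hftc
  have hM_le : ∫ x in -R..R, M x ≤ ∫ x, M x := by
    rw [intervalIntegral.integral_of_le (neg_le_self hR)]
    exact setIntegral_le_integral hM (ae_of_all _ fun x => by positivity)
  have hF_top : 0 ≤ F R := by positivity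
  have hF_bot : F (-R) ≤ 0 := by
    have := mul_nonneg (sq_nonneg (u (-R))) (exp_pos (-V (-R))).le
    simp only [F]
    nlinarith
  linarith

theorem integrable_exp_neg_mul_sq_of_confining (hV : ∀ x, HasDerivAt V (V' x) x)
    (hV' : ∀ x, HasDerivAt V' (V'' x) x) (hC : ∀ x, V'' x ≤ V' x ^ 2 / 2 + C)
    (h_top : ∀ᶠ x in atTop, 0 ≤ V' x) (h_bot : ∀ᶠ x in atBot, V' x ≤ 0)
    (hu : Differentiable ℝ u) (hu_int : Integrable fun x => exp (-V x) * u x ^ 2)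
    (hu'_int : Integrable fun x => exp (-V x) * deriv u x ^ 2) :
    Integrable fun x => exp (-V x) * (V' x * u x) ^ 2 := by
  have hW : Continuous fun x => exp (-V x) * (V' x * u x) ^ 2 := by
    have := continuous_of_forall_hasDerivAt hV
    have := continuous_of_forall_hasDerivAt hV'
    have := hu.continuous
    fun_prop
  have h_neg : Tendsto (fun n : ℕ => -(n : ℝ)) atTop atBot :=
    tendsto_neg_atTop_atBot.comp tendsto_natCast_atTop_atTop
  refine integrable_of_intervalIntegral_norm_bounded
    (4 * ∫ x, exp (-V x) * (|C| * u x ^ 2 + 4 * deriv u x ^ 2)) (fun n => hW.integrableOn_Ioc) h_neg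
    tendsto_natCast_atTop_atTop ?_
  filter_upwards [tendsto_natCast_atTop_atTop.eventually h_top, h_neg.eventually h_bot]
    with n hn_top hn_bot
  simp only [norm_of_nonneg (mul_nonneg (exp_pos _).le (sq_nonneg _))]
  exact integral_exp_neg_mul_sq_le_of_confining hV hV' hC hu hu_int hu'_int n.cast_nonneg
    hn_top hn_bot

end Confining

section Quartic

variable (κ : ℝ)

lemma hasDerivAt_quartic (x : ℝ) :
    HasDerivAt (fun x => x ^ 4 / 4 - κ * x ^ 2 / 2) (x ^ 3 - κ * x) x :=
  (((hasDerivAt_pow 4 x).div_const 4).sub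
    (((hasDerivAt_pow 2 x).const_mul κ).div_const 2)).congr_deriv (by norm_num; ring)

lemma hasDerivAt_cubic (x : ℝ) : HasDerivAt (fun x => x ^ 3 - κ * x) (3 * x ^ 2 - κ) x :=
  ((hasDerivAt_pow 3 x).sub ((hasDerivAt_id x).const_mul κ)).congr_deriv (by norm_num)

lemma three_mul_sq_sub_le (x : ℝ) : 3 * x ^ 2 - κ ≤ (x ^ 3 - κ * x) ^ 2 / 2 + (4 * |κ| + 9) := by
  have hκ := neg_abs_le κ
  have hsq : (x ^ 3 - κ * x) ^ 2 = x ^ 2 * (x ^ 2 - κ) ^ 2 := by ring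
  rcases le_or_gt 6 ((x ^ 2 - κ) ^ 2) with h | h
  · nlinarith [mul_le_mul_of_nonneg_left h (sq_nonneg x), abs_nonneg κ]
  · have : x ^ 2 - κ < 3 := by nlinarith
    nlinarith [le_abs_self κ, sq_nonneg (x ^ 3 - κ * x)]

lemma eventually_cubic_nonneg : ∀ᶠ x in atTop, 0 ≤ x ^ 3 - κ * x := by
  filter_upwards [eventually_ge_atTop (|κ| + 1)] with x hx
  have hx0 : 0 ≤ x := by linarith [abs_nonneg κ]
  have hκx : κ ≤ x ^ 2 := by nlinarith [le_abs_self κ]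
  nlinarith [mul_nonneg hx0 (sub_nonneg.2 hκx)]

lemma eventually_cubic_nonpos : ∀ᶠ x in atBot, x ^ 3 - κ * x ≤ 0 := by
  filter_upwards [eventually_le_atBot (-(|κ| + 1))] with x hx
  have hx0 : 0 ≤ -x := by linarith [abs_nonneg κ]
  have hκx : κ ≤ x ^ 2 := by nlinarith [le_abs_self κ]
  nlinarith [mul_nonneg hx0 (sub_nonneg.2 hκx)]

end Quartic

section WeightedSobolev

variable {V V' : ℝ → ℝ} {Z : ℝ} {u : ℝ → ℝ}

theorem memLp_mul_of_confining {V'' : ℝ → ℝ} {C : ℝ} (hV : ∀ x, HasDerivAt V (V' x) x)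
    (hV' : ∀ x, HasDerivAt V' (V'' x) x) (hC : ∀ x, V'' x ≤ V' x ^ 2 / 2 + C)
    (h_top : ∀ᶠ x in atTop, 0 ≤ V' x) (h_bot : ∀ᶠ x in atBot, V' x ≤ 0) (hZ : 0 < Z)
    (hu : H1mem (gibbsMeasure V Z) u) : MemLp (fun x => V' x * u x) 2 (gibbsMeasure V Z) := by
  obtain ⟨hu_diff, hu_mem, hu'_mem⟩ := hu
  have hVm : Measurable V := (continuous_of_forall_hasDerivAt hV).measurable
  have hV'm : Measurable V' := (continuous_of_forall_hasDerivAt hV').measurable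
  rw [memLp_two_gibbsMeasure_iff hVm hZ (f := fun x => V' x * u x)
    (hV'm.mul hu_diff.continuous.measurable)]
  rw [memLp_two_gibbsMeasure_iff hVm hZ hu_diff.continuous.measurable] at hu_mem
  rw [memLp_two_gibbsMeasure_iff hVm hZ (measurable_deriv u)] at hu'_mem
  exact integrable_exp_neg_mul_sq_of_confining hV hV' hC h_top h_bot hu_diff hu_mem hu'_mem

theorem exp_neg_mul_sq_le_of_h1mem (hV : ∀ x, HasDerivAt V (V' x) x) (hZ : 0 < Z)
    (hu : H1mem (gibbsMeasure V Z) u) (hV'u : MemLp (fun x => V' x * u x) 2 (gibbsMeasure V Z))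
    (x : ℝ) :
    exp (-V x) * u x ^ 2 ≤ Z * (√(∫ y, u y ^ 2 ∂gibbsMeasure V Z) *
      (√(∫ y, (-V' y * u y + deriv u y) ^ 2 ∂gibbsMeasure V Z) +
        √(∫ y, deriv u y ^ 2 ∂gibbsMeasure V Z))) := by
  obtain ⟨hu_diff, hu_mem, hu'_mem⟩ := hu
  have hVm : Measurable V := (continuous_of_forall_hasDerivAt hV).measurable
  set ν := gibbsMeasure V Z
  set J := fun y => -V' y * u y + deriv u y
  have hJ : MemLp J 2 ν := by
    convert hV'u.neg.add hu'_mem using 1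
    ext y
    simp only [J, Pi.add_apply, Pi.neg_apply]
    ring
  have hg : ∀ y, HasDerivAt (fun y => exp (-V y) * u y ^ 2)
      (exp (-V y) * (u y * J y + u y * deriv u y)) y := fun y =>
    ((hV y).neg.exp.mul ((hu_diff y).hasDerivAt.pow 2)).congr_deriv
      (by simp only [J, Pi.neg_apply, Pi.pow_apply]; ring)
  have hint : Integrable (fun y => u y * J y + u y * deriv u y) ν :=
    (hu_mem.integrable_mul hJ).add (hu_mem.integrable_mul hu'_mem)
  have hint_J : Integrable (fun y => |u y| * |J y|) ν := hu_mem.abs.integrable_mul hJ.abs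
  have hint_u' : Integrable (fun y => |u y| * |deriv u y|) ν :=
    hu_mem.abs.integrable_mul hu'_mem.abs
  calc exp (-V x) * u x ^ 2 ≤ ∫ y, |exp (-V y) * (u y * J y + u y * deriv u y)| :=
        le_integral_abs_of_hasDerivAt hg
          ((memLp_two_gibbsMeasure_iff hVm hZ hu_diff.continuous.measurable).1 hu_mem)
          ((integrable_gibbsMeasure_iff hVm hZ).1 hint) x
    _ = Z * ∫ y, |u y * J y + u y * deriv u y| ∂ν := by
        simp_rw [abs_mul (exp _), abs_of_pos (exp_pos _)]
        exact integral_gibbsMeasure hVm hZ _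
    _ ≤ Z * ((∫ y, |u y| * |J y| ∂ν) + ∫ y, |u y| * |deriv u y| ∂ν) := by
        rw [← integral_add hint_J hint_u']
        refine mul_le_mul_of_nonneg_left (integral_mono hint.abs (hint_J.add hint_u') fun y => ?_)
          hZ.le
        simpa only [abs_mul] using abs_add_le (u y * J y) (u y * deriv u y)
    _ ≤ Z * (√(∫ y, u y ^ 2 ∂ν) * √(∫ y, J y ^ 2 ∂ν) +
          √(∫ y, u y ^ 2 ∂ν) * √(∫ y, deriv u y ^ 2 ∂ν)) := by
        gcongr
        · exact integral_abs_mul_le_sqrt_mul_sqrt hu_mem hJ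
        · exact integral_abs_mul_le_sqrt_mul_sqrt hu_mem hu'_mem
    _ = _ := by ring

end WeightedSobolev

lemma abs_exp_neg_div_two_mul (a b : ℝ) : |exp (-a / 2) * b| = √(exp (-a) * b ^ 2) := by
  rw [← sqrt_sq_eq_abs, mul_pow, ← exp_nat_mul]
  ring_nf

lemma sqrt_sqrt_eq_rpow {a : ℝ} (ha : 0 ≤ a) : √(√a) = a ^ (1 / 4 : ℝ) := by
  rw [sqrt_eq_rpow, sqrt_eq_rpow, ← rpow_mul ha]
  norm_num

theorem weighted_sup_bound_general
    (κ : ℝ) (Z : ℝ) (hZ : 0 < Z)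
    (V : ℝ → ℝ) (hV : ∀ x, V x = x ^ 4 / 4 - κ * x ^ 2 / 2)
    (ν : Measure ℝ)
    (hν : ν = (volume : Measure ℝ).withDensity
      (fun x => ENNReal.ofReal (Real.exp (-V x) / Z)))
    (c : ℝ)
    (hJ : ∀ u : ℝ → ℝ, H1mem ν u →
      Real.sqrt (∫ x, (-(x ^ 3 - κ * x) * u x + deriv u x) ^ 2 ∂ν) ≤
        c * Real.sqrt ((∫ x, (deriv u x) ^ 2 ∂ν) + (∫ x, u x ∂ν) ^ 2))
    (CP : ℝ)
    (hCP : ∀ u : ℝ → ℝ, H1mem ν u →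
      (∫ x, (u x) ^ 2 ∂ν) - (∫ x, u x ∂ν) ^ 2 ≤ CP * ∫ x, (deriv u x) ^ 2 ∂ν) :
    ∀ u : ℝ → ℝ, H1mem ν u → ∀ x : ℝ,
      |Real.exp (-V x / 2) * u x| ≤
        Real.sqrt (Z * (c + 1)) * (max 1 CP) ^ ((1 : ℝ) / 4) *
          Real.sqrt ((∫ y, (deriv u y) ^ 2 ∂ν) + (∫ y, u y ∂ν) ^ 2) := by
  intro u hu x
  obtain rfl : ν = gibbsMeasure V Z := hν
  have hVd : ∀ x, HasDerivAt V (x ^ 3 - κ * x) x := by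
    rw [funext hV]
    exact hasDerivAt_quartic κ
  have hsup := exp_neg_mul_sq_le_of_h1mem hVd hZ hu
    (memLp_mul_of_confining hVd (hasDerivAt_cubic κ) (three_mul_sq_sub_le κ)
      (eventually_cubic_nonneg κ) (eventually_cubic_nonpos κ) hZ hu) x
  have hPu := sqrt_le_sqrt_max_one_mul_sqrt (integral_nonneg fun y => sq_nonneg (deriv u y))
    (hCP u hu)
  have hJu := hJ u hu
  set H := √((∫ y, deriv u y ^ 2 ∂gibbsMeasure V Z) + (∫ y, u y ∂gibbsMeasure V Z) ^ 2)
  have hu' : √(∫ y, deriv u y ^ 2 ∂gibbsMeasure V Z) ≤ H :=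
    sqrt_le_sqrt (le_add_of_nonneg_right (sq_nonneg _))
  have hsq : exp (-V x) * u x ^ 2 ≤ Z * (c + 1) * (√(max 1 CP) * H ^ 2) :=
    calc exp (-V x) * u x ^ 2 ≤ _ := hsup
      _ ≤ Z * ((√(max 1 CP) * H) * ((c + 1) * H)) := by gcongr; linarith
      _ = _ := by ring
  calc |exp (-V x / 2) * u x| = √(exp (-V x) * u x ^ 2) := abs_exp_neg_div_two_mul _ _
    _ ≤ √(Z * (c + 1) * (√(max 1 CP) * H ^ 2)) := sqrt_le_sqrt hsq
    _ = √(Z * (c + 1)) * max 1 CP ^ (1 / 4 : ℝ) * H := by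
      rw [sqrt_mul' _ (by positivity), sqrt_mul (sqrt_nonneg _), sqrt_sq (sqrt_nonneg _),
        sqrt_sqrt_eq_rpow (zero_le_one.trans (le_max_left 1 CP)), mul_assoc]

/-- Weighted `L∞` bound: let `V(x) = x⁴/4 − κx²/2`, `ν = e^{-V}dx/Z`,
`Ju = −V'u + u'`.  If `‖Ju‖_{L²(ν)} ≤ c‖u‖_{H¹(ν)}` for all `u ∈ H¹(ν)`, where
`‖u‖²_{H¹(ν)} = ∫(u')²dν + (∫u dν)²`, and `C_P` is a Poincaré constant, then for all
`u ∈ H¹(ν)`, `‖e^{-V/2}u‖_∞ ≤ √(Z(c+1)) max(1,C_P)^{1/4} ‖u‖_{H¹(ν)}`. -/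
theorem weighted_sup_bound
    (κ : ℝ) (Z : ℝ) (hZ : 0 < Z)
    (V : ℝ → ℝ) (hV : ∀ x, V x = x ^ 4 / 4 - κ * x ^ 2 / 2)
    (ν : Measure ℝ)
    (hν : ν = (volume : Measure ℝ).withDensity
      (fun x => ENNReal.ofReal (Real.exp (-V x) / Z)))
    (hprob : IsProbabilityMeasure ν)
    (c : ℝ)
    (hJ : ∀ u : ℝ → ℝ, H1mem ν u →
      Real.sqrt (∫ x, (-(x ^ 3 - κ * x) * u x + deriv u x) ^ 2 ∂ν) ≤
        c * Real.sqrt ((∫ x, (deriv u x) ^ 2 ∂ν) + (∫ x, u x ∂ν) ^ 2))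
    (CP : ℝ)
    (hCP : ∀ u : ℝ → ℝ, H1mem ν u →
      (∫ x, (u x) ^ 2 ∂ν) - (∫ x, u x ∂ν) ^ 2 ≤ CP * ∫ x, (deriv u x) ^ 2 ∂ν) :
    ∀ u : ℝ → ℝ, H1mem ν u → ∀ x : ℝ,
      |Real.exp (-V x / 2) * u x| ≤
        Real.sqrt (Z * (c + 1)) * (max 1 CP) ^ ((1 : ℝ) / 4) *
          Real.sqrt ((∫ y, (deriv u y) ^ 2 ∂ν) + (∫ y, u y ∂ν) ^ 2) :=
  weighted_sup_bound_general κ Z hZ V hV ν hν c hJ CP hCP
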